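/- (Pfaff's transformation) For a, b, c ∈ ℂ with c not a nonpositive integer, and for all x with |x| < 1/2 (so that |x/(x-1)| < 1), ₂F₁(a,b;c;x) = (1-x)^{-a} · ₂F₁(a, c-b; c; x/(x-1)). -/

import Mathlib

open Filter Finset

/-- The Pochhammer symbol `(a)ₖ`. -/
noncomputable def poch (a : ℂ) : ℕ → ℂ
  | 0 => 1
  | k + 1 => poch a k * (a + k)

lemma poch_zero (a : ℂ) : poch a 0 = 1 := rfl
lemma poch_succ (a : ℂ) (k : ℕ) : poch a (k + 1) = poch a k * (a + k) := rfl

lemma poch_succ' (a : ℂ) (k : ℕ) : poch a (k + 1) = a * poch (a + 1) k := by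
  induction k with
  | zero => simp [poch]
  | succ n ih =>
      rw [poch_succ, ih, poch_succ, mul_assoc]
      push_cast
      ring

lemma poch_add (a : ℂ) (m j : ℕ) : poch a (m + j) = poch a m * poch (a + m) j := by
  induction j with
  | zero => simp [poch]
  | succ n ih =>
      have : m + (n + 1) = (m + n) + 1 := by omega
      rw [this, poch_succ, ih, poch_succ]
      push_cast
      ring

lemma poch_ne_zero {c : ℂ} (hc : ∀ n : ℕ, c ≠ -(n : ℂ)) (k : ℕ) : poch c k ≠ 0 := by
  induction k with
  | zero => simp [poch]
  | succ n ih =>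
      rw [poch_succ]
      refine mul_ne_zero ih ?_
      intro h
      exact hc n (by linear_combination h)

lemma norm_poch_le (a : ℂ) (N : ℕ) (h : ‖a‖ ≤ N) (k : ℕ) :
    ‖poch a k‖ ≤ N.ascFactorial k := by
  induction k with
  | zero => simp [poch]
  | succ n ih =>
      rw [poch_succ, Nat.ascFactorial_succ]
      have h1 : ‖a + (n : ℂ)‖ ≤ (N : ℝ) + n := by
        refine (norm_add_le _ _).trans ?_
        simp only [Complex.norm_natCast]
        exact add_le_add_left h n
      rw [norm_mul]
      calc ‖poch a n‖ * ‖a + (n : ℂ)‖ ≤ (N.ascFactorial n : ℝ) * ((N : ℝ) + n) := by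
            exact mul_le_mul ih h1 (norm_nonneg _) (Nat.cast_nonneg _)
        _ = ((N + n) * N.ascFactorial n : ℕ) := by push_cast; ring
        _ ≤ _ := le_refl _

-- (m + A)/(m + B) → 1
lemma tendsto_ratio_one (A B : ℝ) :
    Tendsto (fun m : ℕ => ((m : ℝ) + A) / ((m : ℝ) + B)) atTop (nhds 1) := by
  have h1 : Tendsto (fun m : ℕ => (m : ℝ) + B) atTop atTop :=
    tendsto_atTop_add_const_right _ B tendsto_natCast_atTop_atTop
  have h2 : Tendsto (fun m : ℕ => 1 + (A - B) / ((m : ℝ) + B)) atTop (nhds 1) := by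
    have := Tendsto.div_atTop (tendsto_const_nhds (x := A - B)) h1
    simpa using (tendsto_const_nhds (x := (1:ℝ))).add this
  refine h2.congr' ?_
  filter_upwards [h1.eventually_gt_atTop 0] with m hm
  field_simp
  ring

-- (m + A)/‖c + m‖ → 1
lemma tendsto_ratio_norm_one (c : ℂ) (A : ℝ) :
    Tendsto (fun m : ℕ => ((m : ℝ) + A) / ‖c + (m : ℂ)‖) atTop (nhds 1) := by
  have hlow : Tendsto (fun m : ℕ => ((m:ℝ) + A)/((m:ℝ) - ‖c‖)) atTop (nhds 1) := by
    have := tendsto_ratio_one A (-‖c‖)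
    simpa [sub_eq_add_neg] using this
  refine tendsto_of_tendsto_of_tendsto_of_le_of_le' (tendsto_ratio_one A ‖c‖) hlow ?_ ?_
  · filter_upwards [eventually_gt_atTop (⌈‖c‖ + |A| + 1⌉₊)] with m hm
    have hm' : ‖c‖ + |A| + 1 < (m : ℝ) := by
      calc ‖c‖ + |A| + 1 ≤ (⌈‖c‖ + |A| + 1⌉₊ : ℝ) := Nat.le_ceil _
        _ < m := by exact_mod_cast hm
    have hnum : 0 ≤ (m : ℝ) + A := by
      have : -|A| ≤ A := neg_abs_le A
      nlinarith [norm_nonneg c]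
    have hden : 0 < ‖c + (m : ℂ)‖ := by
      have : (0:ℝ) < m - ‖c‖ := by nlinarith [abs_nonneg A]
      have h2 : (m : ℝ) - ‖c‖ ≤ ‖c + (m : ℂ)‖ := by
        have h3 := norm_add_le (c + (m : ℂ)) (-c)
        have h4 : c + (m : ℂ) + -c = (m : ℂ) := by ring
        rw [h4, Complex.norm_natCast, norm_neg] at h3
        linarith
      linarith
    apply div_le_div_of_nonneg_left hnum hden
    calc ‖c + (m : ℂ)‖ ≤ ‖c‖ + (m : ℝ) := by
          simpa [Complex.norm_natCast] using norm_add_le c (m : ℂ)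
      _ = (m : ℝ) + ‖c‖ := by ring
  · filter_upwards [eventually_gt_atTop (⌈‖c‖ + |A| + 1⌉₊)] with m hm
    have hm' : ‖c‖ + |A| + 1 < (m : ℝ) := by
      calc ‖c‖ + |A| + 1 ≤ (⌈‖c‖ + |A| + 1⌉₊ : ℝ) := Nat.le_ceil _
        _ < m := by exact_mod_cast hm
    have hnum : 0 ≤ (m : ℝ) + A := by
      have : -|A| ≤ A := neg_abs_le A
      nlinarith [norm_nonneg c]
    have hden2 : (0:ℝ) < (m : ℝ) - ‖c‖ := by nlinarith [abs_nonneg A]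
    have h2 : (m : ℝ) - ‖c‖ ≤ ‖c + (m : ℂ)‖ := by
      have h3 := norm_add_le (c + (m : ℂ)) (-c)
      have h4 : c + (m : ℂ) + -c = (m : ℂ) := by ring
      rw [h4, Complex.norm_natCast, norm_neg] at h3
      linarith
    exact div_le_div_of_nonneg_left hnum hden2 h2

lemma summable_master (c : ℂ) (hc : ∀ n : ℕ, c ≠ -(n : ℂ)) (Na Nb : ℕ) (hNa : 1 ≤ Na)
    (hNb : 1 ≤ Nb) {q : ℝ} (hq0 : 0 ≤ q) (hq1 : q < 1) :
    Summable (fun m : ℕ =>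
      (Na.ascFactorial m * Nb.ascFactorial m : ℝ) / (‖poch c m‖ * m.factorial) * q ^ m) := by
  set q' : ℝ := max q (1/2) with hq'
  have hq'0 : 0 < q' := lt_of_lt_of_le (by norm_num) (le_max_right _ _)
  have hq'1 : q' < 1 := max_lt hq1 (by norm_num)
  set u : ℕ → ℝ := fun m =>
    (Na.ascFactorial m * Nb.ascFactorial m : ℝ) / (‖poch c m‖ * m.factorial) * q' ^ m with hu
  have hcm : ∀ m : ℕ, (0:ℝ) < ‖poch c m‖ := fun m =>
    norm_pos_iff.mpr (poch_ne_zero hc m)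
  have hpos : ∀ m, 0 < u m := by
    intro m
    apply mul_pos (div_pos _ (mul_pos (hcm m) (by exact_mod_cast m.factorial_pos))) (pow_pos hq'0 m)
    have h1 : 0 < Na.ascFactorial m := by
      obtain ⟨k, rfl⟩ := Nat.exists_eq_add_of_le hNa
      simpa [Nat.add_comm] using Nat.ascFactorial_pos k m
    have h2 : 0 < Nb.ascFactorial m := by
      obtain ⟨k, rfl⟩ := Nat.exists_eq_add_of_le hNb
      simpa [Nat.add_comm] using Nat.ascFactorial_pos k m
    have := mul_pos h1 h2
    exact_mod_cast this
  have key : ∀ m : ℕ, u (m+1) =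
      u m * (((m:ℝ)+Na)/((m:ℝ)+1) * (((m:ℝ)+Nb)/‖c + (m:ℂ)‖) * q') := by
    intro m
    have hne : ‖c + (m:ℂ)‖ ≠ 0 := by
      have := poch_ne_zero hc (m+1)
      rw [poch_succ] at this
      simpa using (norm_pos_iff.mpr (right_ne_zero_of_mul this)).ne'
    simp only [hu, Nat.ascFactorial_succ, poch_succ, Nat.factorial_succ, pow_succ, norm_mul]
    push_cast
    field_simp
    ring
  have hsum' : Summable u := by
    apply summable_of_ratio_test_tendsto_lt_one hq'1
      (Filter.Eventually.of_forall fun m => (hpos m).ne')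
    have : Tendsto (fun m : ℕ => ((m:ℝ)+Na)/((m:ℝ)+1) * (((m:ℝ)+Nb)/‖c + (m:ℂ)‖) * q')
        atTop (nhds q') := by
      have := ((tendsto_ratio_one Na 1).mul (tendsto_ratio_norm_one c Nb)).mul_const q'
      simpa using this
    refine this.congr fun m => ?_
    rw [Real.norm_of_nonneg (hpos (m+1)).le, Real.norm_of_nonneg (hpos m).le, key m,
      mul_comm (u m), mul_div_assoc, div_self (hpos m).ne', mul_one]
  refine Summable.of_nonneg_of_le (fun m => ?_) (fun m => ?_) hsum'
  · positivity
  · refine mul_le_mul_of_nonneg_left (pow_le_pow_left₀ hq0 (le_max_left _ _) m) ?_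
    positivity

lemma asc_div_factorial (N j : ℕ) :
    ((N+1).ascFactorial j : ℝ) / j.factorial = (j + N).choose N := by
  rw [Nat.ascFactorial_eq_factorial_mul_choose]
  have h : (N + j).choose j = (j + N).choose N := by
    rw [Nat.add_comm N j]
    exact Nat.choose_symm_add
  push_cast [h]
  field_simp

lemma hasSum_asc_geom (N : ℕ) {t : ℝ} (ht : ‖t‖ < 1) :
    HasSum (fun j : ℕ => ((N+1).ascFactorial j : ℝ) / j.factorial * t ^ j)
      (1 / (1 - t) ^ (N + 1)) := by
  refine (hasSum_choose_mul_geometric_of_norm_lt_one N ht).congr_fun fun j => ?_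
  rw [asc_div_factorial]

lemma summable_asc_succ_geom (N : ℕ) {t : ℝ} (ht : ‖t‖ < 1) :
    Summable (fun k : ℕ => ((N+1).ascFactorial (k+1) : ℝ) / k.factorial * t ^ k) := by
  have key : ∀ k : ℕ, (N+1).ascFactorial (k+1) = (N+1) * ((k + (N+1)).choose (N+1)) * k.factorial := by
    intro k
    rw [Nat.ascFactorial_succ, Nat.ascFactorial_eq_factorial_mul_choose]
    have h1 : (N + k).choose k = (N + k).choose N := Nat.choose_symm_of_eq_add (Nat.add_comm N k)
    have h2 : (N + k + 1) * (N + k).choose N = (N + k + 1).choose (N + 1) * (N + 1) :=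
      Nat.add_one_mul_choose_eq (N + k) N
    have h3 : k + (N + 1) = N + k + 1 := by omega
    calc (N + 1 + k) * (k.factorial * (N + k).choose k)
        = k.factorial * ((N + k + 1) * (N + k).choose N) := by rw [h1]; ring_nf
      _ = k.factorial * ((N + k + 1).choose (N + 1) * (N + 1)) := by rw [h2]
      _ = (N+1) * ((k + (N+1)).choose (N+1)) * k.factorial := by rw [h3]; ring
  have h := ((summable_choose_mul_geometric_of_norm_lt_one (N+1) ht).mul_left ((N:ℝ)+1))
  refine h.congr fun k => ?_
  rw [key k]
  push_cast
  field_simp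

lemma binomial_hasSum (a z : ℂ) (hz : ‖z‖ < 1) :
    HasSum (fun k : ℕ => poch a k / k.factorial * z ^ k) ((1 - z) ^ (-a)) := by
  classical
  set Na := ⌈‖a‖⌉₊ with hNa
  have ha : ‖a‖ ≤ (Na + 1 : ℕ) := by
    push_cast
    exact (Nat.le_ceil _).trans (by linarith)
  set r : ℝ := (‖z‖ + 1) / 2 with hr
  have hzr : ‖z‖ < r := by rw [hr]; linarith
  have hr1 : r < 1 := by rw [hr]; linarith
  have hr0 : 0 < r := lt_of_le_of_lt (norm_nonneg z) hzr
  have hrn : ‖r‖ < 1 := by rwa [Real.norm_of_nonneg hr0.le]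
  set s : Set ℂ := Metric.ball (0 : ℂ) r with hs
  have hzs : z ∈ s := by simpa [hs, Metric.mem_ball] using hzr
  have h0s : (0 : ℂ) ∈ s := by simpa [hs, Metric.mem_ball] using hr0
  have hnorm_s : ∀ w ∈ s, ‖w‖ ≤ r := fun w hw => by
    simpa [hs, Metric.mem_ball] using (le_of_lt (by simpa [hs, Metric.mem_ball] using hw))
  set g : ℕ → ℂ → ℂ := fun k w => poch a k / k.factorial * w ^ k with hg_def
  set g' : ℕ → ℂ → ℂ := fun k w => poch a k / k.factorial * (k * w ^ (k - 1)) with hg'_def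
  set u : ℕ → ℝ := fun k =>
    if k = 0 then 0 else ((Na + 1).ascFactorial k : ℝ) / (k - 1).factorial * r ^ (k - 1) with hu_def
  have hu : Summable u := by
    rw [← summable_nat_add_iff 1]
    refine (summable_asc_succ_geom Na hrn).congr fun k => ?_
    simp [hu_def]
  have hg : ∀ k w, w ∈ s → HasDerivAt (g k) (g' k w) w := fun k w _ =>
    (hasDerivAt_pow k w).const_mul _
  have hpoch_bound : ∀ k, ‖poch a k‖ ≤ ((Na + 1).ascFactorial k : ℝ) :=
    norm_poch_le a (Na + 1) ha
  have hg'' : ∀ k w, ‖w‖ ≤ r → ‖g' k w‖ ≤ u k := by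
    rintro (_ | k) w hwr
    · simp [hg'_def, hu_def]
    · simp only [hg'_def, hu_def, if_neg (Nat.succ_ne_zero k), Nat.add_sub_cancel,
        norm_mul, norm_div, norm_pow, Complex.norm_natCast]
      have efac : (((k+1).factorial : ℕ) : ℝ) = ((k:ℝ)+1) * k.factorial := by
        push_cast [Nat.factorial_succ]
        ring
      rw [efac]
      push_cast
      have hpow : ‖w‖ ^ k ≤ r ^ k := pow_le_pow_left₀ (norm_nonneg w) hwr k
      calc ‖poch a (k+1)‖ / (((k:ℝ)+1) * (k.factorial : ℝ)) * (((k:ℝ)+1) * ‖w‖ ^ k)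
          ≤ ((Na+1).ascFactorial (k+1) : ℝ) / (((k:ℝ)+1) * (k.factorial : ℝ))
            * (((k:ℝ)+1) * r ^ k) := by
            gcongr
            exact hpoch_bound (k+1)
        _ = ((Na+1).ascFactorial (k+1) : ℝ) / (k.factorial : ℝ) * r ^ k := by
            have hk1 : ((k : ℝ) + 1) ≠ 0 := by positivity
            have hfk : ((k.factorial : ℕ) : ℝ) ≠ 0 := by positivity
            push_cast
            field_simp
  have hg' : ∀ k w, w ∈ s → ‖g' k w‖ ≤ u k := fun k w hw => hg'' k w (hnorm_s w hw)
  have hg0 : Summable fun k => g k 0 := by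
    refine summable_of_ne_finset_zero (s := {0}) fun k hk => ?_
    have hk0 : k ≠ 0 := by simpa using hk
    simp [hg_def, zero_pow hk0]
  have hderiv : ∀ w ∈ s, HasDerivAt (fun y => ∑' k, g k y) (∑' k, g' k w) w := fun w hw =>
    hasDerivAt_tsum_of_isPreconnected hu Metric.isOpen_ball
      (convex_ball (0:ℂ) r).isPreconnected hg hg' h0s hg0 hw
  set f : ℂ → ℂ := fun w => ∑' k, g k w with hf_def
  have hsummable : ∀ w, ‖w‖ ≤ r → Summable (fun k => g k w) := by
    intro w hw
    refine Summable.of_norm_bounded (hasSum_asc_geom Na hrn).summable fun k => ?_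
    simp only [hg_def]
    rw [norm_mul, norm_div, norm_pow, Complex.norm_natCast]
    gcongr
    all_goals first
      | exact hpoch_bound k
      | exact norm_nonneg w
      | exact hw
  have hsummable1 : ∀ w, ‖w‖ ≤ r → Summable (fun k => poch a (k+1) / (k.factorial : ℂ) * w ^ k) := by
    intro w hw
    refine Summable.of_norm_bounded (summable_asc_succ_geom Na hrn) fun k => ?_
    rw [norm_mul, norm_div, norm_pow, Complex.norm_natCast]
    gcongr
    all_goals first
      | exact hpoch_bound (k+1)
      | exact norm_nonneg w
      | exact hw
  set f1 : ℂ → ℂ := fun w => ∑' k, poch a (k+1) / (k.factorial : ℂ) * w ^ k with hf1_def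
  have hDz : ∀ w, ‖w‖ ≤ r → (∑' k, g' k w) = f1 w := by
    intro w hw
    have hsum : Summable fun k => g' k w :=
      Summable.of_norm_bounded hu fun k => hg'' k w hw
    rw [hsum.tsum_eq_zero_add]
    have hz0 : g' 0 w = 0 := by simp [hg'_def]
    rw [hz0, zero_add, hf1_def]
    refine tsum_congr fun k => ?_
    simp only [hg'_def, Nat.add_sub_cancel]
    have efac : (((k+1).factorial : ℕ) : ℂ) = ((k:ℂ)+1) * k.factorial := by
      push_cast [Nat.factorial_succ]
      ring
    have hk1 : ((k : ℂ) + 1) ≠ 0 := Nat.cast_add_one_ne_zero k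
    have hfk : ((k.factorial : ℕ) : ℂ) ≠ 0 := Nat.cast_ne_zero.mpr k.factorial_pos.ne'
    rw [efac]
    field_simp
    push_cast
    ring
  -- the ODE identity : (1 - w) * f1 w = a * f w
  have hODE : ∀ w, ‖w‖ ≤ r → (1 - w) * f1 w = a * f w := by
    intro w hw
    have S0 : HasSum (fun k => g k w) (f w) := (hsummable w hw).hasSum
    have S1 : HasSum (fun j => poch a (j+1) / (j.factorial : ℂ) * w ^ j) (f1 w) :=
      (hsummable1 w hw).hasSum
    have S2 : HasSum (fun j => w * (poch a (j+1) / (j.factorial : ℂ) * w ^ j)) (w * f1 w) :=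
      S1.mul_left w
    set h : ℕ → ℂ := fun j => poch a j * j / (j.factorial : ℂ) * w ^ j with hh_def
    have S2' : HasSum (fun j => h (j + 1)) (w * f1 w) := by
      refine S2.congr_fun fun j => ?_
      simp only [hh_def]
      have efac : (((j+1).factorial : ℕ) : ℂ) = ((j:ℂ)+1) * j.factorial := by
        push_cast [Nat.factorial_succ]
        ring
      have hk1 : ((j : ℂ) + 1) ≠ 0 := Nat.cast_add_one_ne_zero j
      have hfk : ((j.factorial : ℕ) : ℂ) ≠ 0 := Nat.cast_ne_zero.mpr j.factorial_pos.ne'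
      rw [efac]
      push_cast
      field_simp
      ring
    have S3 : HasSum h (w * f1 w) := by
      have t := (hasSum_nat_add_iff (f := h) 1).mp S2'
      simpa [hh_def] using t
    have S4 : HasSum (fun j => poch a (j+1) / (j.factorial : ℂ) * w ^ j
        - a * (poch a j / (j.factorial : ℂ) * w ^ j)) (f1 w - a * f w) :=
      S1.sub (S0.mul_left a)
    have S4' : HasSum h (f1 w - a * f w) := by
      refine S4.congr_fun fun j => ?_
      simp only [hh_def]
      rw [poch_succ]
      ring
    have := S3.unique S4'
    linear_combination -this
  -- Φ is constant on the ball
  set Φ : ℂ → ℂ := fun w => (1 - w) ^ a * f w with hΦ_def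
  have hne1 : ∀ w : ℂ, ‖w‖ < 1 → (1 : ℂ) - w ≠ 0 := by
    intro w hw h
    have : w = 1 := by linear_combination -h
    rw [this] at hw
    simp at hw
  have hslit : ∀ w : ℂ, ‖w‖ < 1 → (1 - w) ∈ Complex.slitPlane := by
    intro w hw
    rw [Complex.mem_slitPlane_iff]
    left
    have : w.re ≤ ‖w‖ := Complex.re_le_norm w
    simp only [Complex.sub_re, Complex.one_re]
    linarith
  have hΦderiv : ∀ w ∈ s, HasDerivAt Φ 0 w := by
    intro w hw
    have hwr : ‖w‖ < r := by simpa [hs, Metric.mem_ball] using hw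
    have hw1 : ‖w‖ < 1 := lt_trans hwr hr1
    have hd1 : HasDerivAt (fun y : ℂ => (1 : ℂ) - y) (-1) w := by
      simpa using (hasDerivAt_id w).const_sub 1
    have hu' : HasDerivAt (fun y : ℂ => (1 - y) ^ a) (a * (1 - w) ^ (a - 1) * (-1)) w :=
      HasDerivAt.cpow_const hd1 (hslit w hw1)
    have hm := hu'.mul (hderiv w hw)
    have hval : a * (1 - w) ^ (a - 1) * (-1) * f w + (1 - w) ^ a * (∑' k, g' k w) = 0 := by
      rw [hDz w hwr.le]
      have hpow : (1 - w) ^ (a - 1) * (1 - w) = (1 - w) ^ a := by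
        rw [Complex.cpow_sub _ _ (hne1 w hw1), Complex.cpow_one]
        rw [div_mul_cancel₀ _ (hne1 w hw1)]
      have hode := hODE w hwr.le
      linear_combination ((1 - w) ^ (a - 1)) * hode - f1 w * hpow
    rw [← hval]
    exact hm
  have hΦconst : Φ z = Φ 0 := by
    refine (convex_ball (0:ℂ) r).is_const_of_fderivWithin_eq_zero (𝕜 := ℂ)
      (fun w hw => ((hΦderiv w hw).differentiableAt).differentiableWithinAt) ?_ hzs h0s
    intro w hw
    rw [fderivWithin_of_isOpen Metric.isOpen_ball hw]
    have : HasFDerivAt Φ ((1 : ℂ →L[ℂ] ℂ).smulRight (0:ℂ)) w :=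
      hasDerivAt_iff_hasFDerivAt.mp (hΦderiv w hw)
    rw [this.fderiv]
    ext1
    simp
  have hf0 : f 0 = 1 := by
    have : ∀ k : ℕ, k ≠ 0 → g k 0 = 0 := by
      intro k hk
      simp [hg_def, zero_pow hk]
    rw [hf_def]
    show (∑' (k : ℕ), g k 0) = 1
    rw [tsum_eq_single 0 (fun k hk => this k hk)]
    simp [hg_def, poch_zero]
  have hΦ0 : Φ 0 = 1 := by
    simp [hΦ_def, hf0, Complex.one_cpow]
  have hfz : f z = (1 - z) ^ (-a) := by
    have h1 : (1 - z) ^ a * f z = 1 := by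
      have := hΦconst
      rw [hΦ0] at this
      simpa [hΦ_def] using this
    rw [Complex.cpow_neg]
    exact eq_inv_of_mul_eq_one_left (by linear_combination h1)
  have := (hsummable z hzr.le).hasSum
  rw [show (∑' k, g k z) = f z from rfl, hfz] at this
  exact this

lemma vandermonde (d : ℂ) : ∀ (n : ℕ) (c : ℂ),
    (∑ m ∈ Finset.range (n+1),
      (-1:ℂ)^m * (n.choose m : ℂ) * poch d m * poch (c + m) (n - m)) = poch (c - d) n := by
  intro n
  induction n with
  | zero => intro c; simp [poch]
  | succ n ih =>
      intro c
      set F : ℕ → ℂ := fun m =>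
        (-1:ℂ)^m * ((n+1).choose m : ℂ) * poch d m * poch (c + m) (n + 1 - m) with hF
      set G : ℕ → ℂ := fun m =>
        (-1:ℂ)^m * (n.choose m : ℂ) * poch d m * poch (c + m) (n + 1 - m) with hG
      set A : ℕ → ℂ := fun m =>
        (-1:ℂ)^(m+1) * (n.choose m : ℂ) * poch d (m+1) * poch ((c + 1) + m) (n - m) with hA
      have step1 : (∑ m ∈ Finset.range (n+2), F m)
          = (∑ i ∈ Finset.range (n+1), F (i+1)) + F 0 := Finset.sum_range_succ' F (n+1)
      have step2 : ∀ i ∈ Finset.range (n+1), F (i+1) = A i + G (i+1) := by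
        intro i hi
        simp only [hF, hG, hA, Nat.choose_succ_succ, Nat.succ_sub_succ]
        have harg : c + ((i+1 : ℕ) : ℂ) = (c + 1) + (i : ℂ) := by push_cast; ring
        rw [harg]
        push_cast
        ring
      have step3 : (∑ i ∈ Finset.range (n+1), G (i+1)) + F 0
          = ∑ m ∈ Finset.range (n+1), G m := by
        have hF0 : F 0 = G 0 := by simp [hF, hG]
        rw [hF0, ← Finset.sum_range_succ' G (n+1)]
        rw [Finset.sum_range_succ G (n+1)]
        have : G (n+1) = 0 := by
          simp [hG, Nat.choose_succ_self]
        rw [this, add_zero]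
      have step4 : ∀ m ∈ Finset.range (n+1), A m + G m
          = (c - d) * ((-1:ℂ)^m * (n.choose m : ℂ) * poch d m * poch ((c + 1) + m) (n - m)) := by
        intro m hm
        have hmn : m ≤ n := by
          have := Finset.mem_range.mp hm; omega
        have hsub : n + 1 - m = (n - m) + 1 := by omega
        have harg : (c + (m:ℂ)) + 1 = (c + 1) + (m : ℂ) := by ring
        simp only [hA, hG, hsub, poch_succ' (c + (m:ℂ)) (n - m), poch_succ d m, harg]
        ring
      calc ∑ m ∈ Finset.range (n+2), F m
          = (∑ i ∈ Finset.range (n+1), (A i + G (i+1))) + F 0 := by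
            rw [step1]; congr 1; exact Finset.sum_congr rfl step2
        _ = (∑ i ∈ Finset.range (n+1), A i)
            + ((∑ i ∈ Finset.range (n+1), G (i+1)) + F 0) := by
            rw [Finset.sum_add_distrib]; ring
        _ = (∑ i ∈ Finset.range (n+1), A i) + ∑ m ∈ Finset.range (n+1), G m := by rw [step3]
        _ = ∑ m ∈ Finset.range (n+1), (A m + G m) := by rw [Finset.sum_add_distrib]
        _ = ∑ m ∈ Finset.range (n+1),
              (c - d) * ((-1:ℂ)^m * (n.choose m : ℂ) * poch d m * poch ((c + 1) + m) (n - m)) :=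
            Finset.sum_congr rfl step4
        _ = (c - d) * ∑ m ∈ Finset.range (n+1),
              (-1:ℂ)^m * (n.choose m : ℂ) * poch d m * poch ((c + 1) + m) (n - m) := by
            rw [Finset.mul_sum]
        _ = (c - d) * poch ((c + 1) - d) n := by rw [ih (c+1)]
        _ = poch (c - d) (n+1) := by
            rw [poch_succ' (c - d) n]
            congr 1
            ring

lemma tsum_prod_antidiagonal {F : ℕ × ℕ → ℂ} (h : Summable F) :
    ∑' p : ℕ × ℕ, F p = ∑' n : ℕ, ∑ kl ∈ Finset.HasAntidiagonal.antidiagonal n, F kl := by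
  conv_rhs => congr; ext; rw [← Finset.sum_finset_coe, ← tsum_fintype (L := .unconditional _)]
  rw [← Finset.HasAntidiagonal.sigmaAntidiagonalEquivProd.tsum_eq F]
  exact Summable.tsum_sigma' (fun n => (hasSum_fintype _).summable)
    (Finset.HasAntidiagonal.sigmaAntidiagonalEquivProd.summable_iff.mpr h)

/-- The Gauss hypergeometric series `₂F₁(a,b;c;z)`. -/
noncomputable def F21 (a b c z : ℂ) : ℂ :=
  ∑' k : ℕ, poch a k * poch b k / (poch c k * (Nat.factorial k : ℂ)) * z ^ k

set_option maxHeartbeats 2000000 in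
lemma pfaff_aux (a b c : ℂ) (hc : ∀ n : ℕ, c ≠ -(n : ℂ)) (x : ℂ) (hx2 : ‖x‖ < 1 / 2) :
      F21 a b c x = (1 - x) ^ (-a) * F21 a (c - b) c (x / (x - 1)) := by
  have hx1 : ‖x‖ < 1 := by linarith [hx2]
  have hxn : ‖(‖x‖ : ℝ)‖ < 1 := by rwa [Real.norm_of_nonneg (norm_nonneg x)]
  have h1x : (1 : ℂ) - x ≠ 0 := by
    intro h
    have : x = 1 := by linear_combination -h
    rw [this] at hx1; simp at hx1
  have hx1' : x - 1 ≠ 0 := fun h => h1x (by linear_combination -h)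
  set q : ℝ := ‖x‖ / (1 - ‖x‖) with hq
  have h1xpos : (0:ℝ) < 1 - ‖x‖ := by linarith
  have hq0 : 0 ≤ q := div_nonneg (norm_nonneg x) h1xpos.le
  have hq1 : q < 1 := by
    rw [hq, div_lt_one h1xpos]; linarith
  set z : ℂ := x / (x - 1) with hz_def
  set A : ℕ → ℂ := fun m =>
    poch a m * poch (c - b) m / (poch c m * (m.factorial : ℂ)) with hA
  set F : ℕ × ℕ → ℂ := fun p =>
    A p.1 * (-1:ℂ)^p.1 * x^p.1 * (poch (a + p.1) p.2 / (p.2.factorial : ℂ) * x^p.2) with hF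
  -- row sums
  have hrows : ∀ m : ℕ, HasSum (fun j => F (m, j))
      (A m * (-1:ℂ)^m * x^m * (1 - x) ^ (-(a + m))) := fun m =>
    (binomial_hasSum (a + m) x hx1).mul_left _
  -- norm bounds
  set Nc : ℕ := ⌈‖a‖⌉₊ with hNc
  have hpbound : ∀ m j : ℕ, ‖poch (a + m) j‖ ≤ ((Nc + m + 1).ascFactorial j : ℝ) := by
    intro m j
    refine norm_poch_le _ _ ?_ j
    push_cast
    calc ‖a + (m:ℂ)‖ ≤ ‖a‖ + m := by
          simpa using norm_add_le a (m : ℂ)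
      _ ≤ Nc + m + 1 := by
          have := Nat.le_ceil ‖a‖
          rw [hNc]; push_cast at this ⊢; linarith
  have hrow_bound : ∀ m j : ℕ, ‖F (m, j)‖ ≤
      ‖A m * (-1:ℂ)^m * x^m‖ * (((Nc + m + 1).ascFactorial j : ℝ) / j.factorial * ‖x‖ ^ j) := by
    intro m j
    simp only [hF, norm_mul, norm_div, norm_pow, Complex.norm_natCast]
    gcongr
    exact hpbound m j
  have hmaj : ∀ m : ℕ, HasSum (fun j => ((Nc + m + 1).ascFactorial j : ℝ) / j.factorial * ‖x‖ ^ j)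
      (1 / (1 - ‖x‖) ^ (Nc + m + 1)) := fun m => by
    have := hasSum_asc_geom (Nc + m) hxn
    simpa using this
  -- summability of the norms over ℕ × ℕ
  have hAbound : Summable (fun m => ‖A m‖ * q ^ m) := by
    have hmaster := summable_master c hc (⌈‖a‖⌉₊ + 1) (⌈‖c - b‖⌉₊ + 1)
      (Nat.le_add_left 1 _) (Nat.le_add_left 1 _) hq0 hq1
    refine Summable.of_nonneg_of_le (fun m => by positivity) (fun m => ?_) hmaster
    refine mul_le_mul_of_nonneg_right ?_ (pow_nonneg hq0 m)
    simp only [hA, norm_div, norm_mul, Complex.norm_natCast]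
    gcongr
    · exact norm_poch_le a _ ((Nat.le_ceil ‖a‖).trans (by push_cast; linarith)) m
    · exact norm_poch_le (c-b) _ ((Nat.le_ceil ‖c-b‖).trans (by push_cast; linarith)) m
  have hnorm_summable : Summable (fun p : ℕ × ℕ => ‖F p‖) := by
    rw [summable_prod_of_nonneg (fun p => norm_nonneg (F p))]
    constructor
    · intro m
      refine Summable.of_nonneg_of_le (fun j => norm_nonneg _) (hrow_bound m)
        (((hmaj m).summable).mul_left _)
    · have hcolbound : Summable (fun m =>
          ‖A m * (-1:ℂ)^m * x^m‖ * (1 / (1 - ‖x‖) ^ (Nc + m + 1))) := by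
        have heq : ∀ m : ℕ, ‖A m * (-1:ℂ)^m * x^m‖ * (1 / (1 - ‖x‖) ^ (Nc + m + 1))
            = (1 / (1 - ‖x‖) ^ (Nc + 1)) * (‖A m‖ * q ^ m) := by
          intro m
          rw [norm_mul, norm_mul, norm_pow, norm_pow, norm_neg, norm_one,
            one_pow, mul_one, pow_add, pow_add]
          rw [hq, div_pow]
          field_simp
          ring
        simp_rw [heq]
        exact hAbound.mul_left _
      refine Summable.of_nonneg_of_le (fun m => tsum_nonneg fun j => norm_nonneg _)
        (fun m => ?_) hcolbound
      calc ∑' j, ‖F (m, j)‖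
          ≤ ∑' j, ‖A m * (-1:ℂ)^m * x^m‖
            * (((Nc + m + 1).ascFactorial j : ℝ) / j.factorial * ‖x‖ ^ j) := by
            refine Summable.tsum_le_tsum (hrow_bound m) ?_ (((hmaj m).summable).mul_left _)
            exact Summable.of_nonneg_of_le (fun j => norm_nonneg _) (hrow_bound m)
              (((hmaj m).summable).mul_left _)
        _ = ‖A m * (-1:ℂ)^m * x^m‖ * (1 / (1 - ‖x‖) ^ (Nc + m + 1)) := by
            rw [tsum_mul_left, (hmaj m).tsum_eq]
  have hFsum : Summable F := Summable.of_norm hnorm_summable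
  set T : ℂ := ∑' p : ℕ × ℕ, F p with hT
  have hcols : HasSum (fun m => A m * (-1:ℂ)^m * x^m * (1 - x) ^ (-(a + m))) T :=
    hFsum.hasSum.prod_fiberwise hrows
  -- pointwise identification of column sums
  have hpt : ∀ m : ℕ, A m * (-1:ℂ)^m * x^m * (1 - x) ^ (-(a + m))
      = (1 - x) ^ (-a) * (A m * z ^ m) := by
    intro m
    have hpowne : ((1:ℂ) - x) ^ m ≠ 0 := pow_ne_zero _ h1x
    have hcp : (1 - x) ^ (-(a + (m:ℂ))) = (1 - x) ^ (-a) * ((1 - x) ^ m)⁻¹ := by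
      rw [show -(a + (m:ℂ)) = -a + -(m:ℂ) by ring, Complex.cpow_add _ _ h1x,
        Complex.cpow_neg (1 - x) (m : ℂ), Complex.cpow_natCast]
    have hzm : z ^ m = (-1:ℂ)^m * x^m * ((1 - x) ^ m)⁻¹ := by
      have hinv : ((-1:ℂ)^m)⁻¹ = (-1:ℂ)^m := by
        rw [← inv_pow]; norm_num
      rw [hz_def, div_pow, show (x - 1) = -(1 - x) by ring, neg_pow, div_eq_mul_inv,
        mul_inv, hinv]
      ring
    rw [hcp, hzm]
    have hsq : (-1:ℂ)^m * (-1:ℂ)^m = 1 := by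
      rw [← mul_pow]; norm_num
    calc A m * (-1:ℂ)^m * x^m * ((1 - x) ^ (-a) * ((1 - x) ^ m)⁻¹)
        = ((-1:ℂ)^m * (-1:ℂ)^m) * ((1 - x) ^ (-a) * (A m * ((-1:ℂ)^m * x^m * ((1-x)^m)⁻¹)))
          * ((-1:ℂ)^m * (-1:ℂ)^m) := by rw [hsq]; ring
      _ = (1 - x) ^ (-a) * (A m * ((-1:ℂ)^m * x^m * ((1 - x) ^ m)⁻¹)) := by rw [hsq]; ring
  have hcols' : HasSum (fun m => (1 - x) ^ (-a) * (A m * z ^ m)) T := by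
    refine hcols.congr_fun fun m => ?_
    exact (hpt m).symm
  have hpowa_ne : ((1:ℂ) - x) ^ (-a) ≠ 0 := by
    intro h
    rcases (Complex.cpow_eq_zero_iff _ _).mp h with ⟨h1, _⟩
    exact h1x h1
  have hzsum : HasSum (fun m => A m * z ^ m) ((((1:ℂ) - x) ^ (-a))⁻¹ * T) := by
    have := hcols'.mul_left ((((1:ℂ) - x) ^ (-a))⁻¹)
    refine this.congr_fun fun m => ?_
    rw [← mul_assoc, inv_mul_cancel₀ hpowa_ne, one_mul]
  have hF21z : F21 a (c - b) c z = (((1:ℂ) - x) ^ (-a))⁻¹ * T := by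
    rw [F21]
    exact hzsum.tsum_eq
  -- the diagonal computation
  have hcoeff : ∀ n : ℕ, ∑ kl ∈ Finset.HasAntidiagonal.antidiagonal n, F kl
      = poch a n * poch b n / (poch c n * (n.factorial : ℂ)) * x ^ n := by
    intro n
    rw [Finset.Nat.sum_antidiagonal_eq_sum_range_succ_mk]
    have hterm : ∀ m ∈ Finset.range (n+1), F (m, n - m)
        = (poch a n / ((n.factorial : ℂ) * poch c n) * x ^ n)
          * ((-1:ℂ)^m * (n.choose m : ℂ) * poch (c - b) m * poch (c + m) (n - m)) := by
      intro m hm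
      have hmn : m ≤ n := by have := Finset.mem_range.mp hm; omega
      have e1 : poch a m * poch (a + m) (n - m) = poch a n := by
        rw [← poch_add]; congr 1; omega
      have e2 : poch c m * poch (c + m) (n - m) = poch c n := by
        rw [← poch_add]; congr 1; omega
      have e3 : ((n.choose m : ℕ) : ℂ) * (m.factorial : ℂ) * ((n - m).factorial : ℂ)
          = (n.factorial : ℂ) := by
        push_cast [← Nat.choose_mul_factorial_mul_factorial hmn]
        ring
      have ex : x ^ m * x ^ (n - m) = x ^ n := by
        rw [← pow_add]; congr 1; omega
      have hcm : poch c m ≠ 0 := poch_ne_zero hc m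
      have hcm2 : poch (c + m) (n - m) ≠ 0 := by
        refine poch_ne_zero (c := c + m) ?_ (n - m)
        intro k h
        refine hc (k + m) ?_
        push_cast
        linear_combination h
      have hfm : (m.factorial : ℂ) ≠ 0 := Nat.cast_ne_zero.mpr m.factorial_pos.ne'
      have hfnm : ((n - m).factorial : ℂ) ≠ 0 := Nat.cast_ne_zero.mpr (n-m).factorial_pos.ne'
      have hchoose : ((n.choose m : ℕ) : ℂ) ≠ 0 :=
        Nat.cast_ne_zero.mpr (Nat.choose_pos hmn).ne'
      rw [hF, hA, ← e1, ← e2, ← e3, ← ex]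
      simp only
      field_simp [hcm, hcm2, hfm, hfnm, hchoose]
    rw [Finset.sum_congr rfl hterm, ← Finset.mul_sum, vandermonde (c - b) n c]
    have hb : poch (c - (c - b)) n = poch b n := by congr 1; ring
    rw [hb]
    field_simp
  -- final assembly
  have hdiag : F21 a b c x = T := by
    rw [F21, hT, tsum_prod_antidiagonal hFsum]
    exact tsum_congr fun n => (hcoeff n).symm
  rw [hdiag, hF21z, ← mul_assoc, mul_inv_cancel₀ hpowa_ne, one_mul]

/-- Pfaff's transformation: for `c` not a nonpositive integer and `|x| < 1/2`,
`₂F₁(a,b;c;x) = (1-x)^{-a} ₂F₁(a, c-b; c; x/(x-1))`. -/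
theorem pfaff_transformation (a b c : ℂ) (hc : ∀ n : ℕ, c ≠ -(n : ℂ)) :
    ∀ x : ℂ, ‖x‖ < 1 / 2 →
      F21 a b c x = (1 - x) ^ (-a) * F21 a (c - b) c (x / (x - 1)) := by
  intro x hx
  exact pfaff_aux a b c hc x hx
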